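/- For each integer m ≥ 2, define w(m) : ℕ → ℝ by w(m) 0 = 1/2 and w(m) (k+1) = (1 + w(m) k − √((1 − w(m) k)² + 1/m))/2, set d(m) k = (1/2)·(1 + (1 − w(m) k)/√((1 − w(m) k)² + 1/m)), and set q(m) k = ∏_{j=0}^{k−1} d(m) j. Then for every fixed t ∈ [0,1], q(m) ⌊t(m−1)⌋ → 1/√(1 + 2t) as m → ∞. -/

import Mathlib

set_option maxHeartbeats 1000000


open Filter

/-- The critical iterates `w(m)₀ = 1/2`, `w(m)_{k+1} = (1 + w(m)_k − √((1 − w(m)_k)² + 1/m))/2`. -/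
noncomputable def wG (m : ℕ) : ℕ → ℝ
  | 0 => 1 / 2
  | k + 1 => (1 + wG m k - Real.sqrt ((1 - wG m k) ^ 2 + 1 / (m : ℝ))) / 2

/-- The derivative factors `d(m)_k = (1/2)·(1 + (1 − w(m)_k)/√((1 − w(m)_k)² + 1/m))`. -/
noncomputable def dG (m k : ℕ) : ℝ :=
  (1 / 2) * (1 + (1 - wG m k) / Real.sqrt ((1 - wG m k) ^ 2 + 1 / (m : ℝ)))

/-- The tail products `q(m)_k = ∏_{j=0}^{k−1} d(m)_j`. -/
noncomputable def qG (m k : ℕ) : ℝ :=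
  ∏ j ∈ Finset.range k, dG m j

lemma wG_key (m : ℕ) (hm : 1 ≤ m) : ∀ k : ℕ,
    1/2 ≤ 1 - wG m k ∧ 4*(m:ℝ)*(1 - wG m k)^2 ≤ m + 2*k ∧
      (m:ℝ)*((m:ℝ)+2*k) - k ≤ 4*(m:ℝ)^2*(1 - wG m k)^2 := by
  have hm1 : (1:ℝ) ≤ m := by exact_mod_cast hm
  have hm0 : (0:ℝ) < m := by linarith
  intro k
  induction k with
  | zero =>
    refine ⟨by norm_num [wG], ?_, ?_⟩
    · norm_num [wG]; nlinarith
    · norm_num [wG]; nlinarith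
  | succ k ih =>
    obtain ⟨hu, hb, hc⟩ := ih
    set u := 1 - wG m k with hudef
    set s := Real.sqrt (u^2 + 1/(m:ℝ)) with hsdef
    have hsnn : 0 ≤ s := Real.sqrt_nonneg _
    have hs2 : s^2 = u^2 + 1/(m:ℝ)  := Real.sq_sqrt (by positivity)
    have hsu : u ≤ s := by
      have h := Real.sqrt_le_sqrt (show u^2 ≤ u^2 + 1/(m:ℝ) by
        have : (0:ℝ) ≤ 1/(m:ℝ) := by positivity
        linarith)
      rwa [Real.sqrt_sq (by linarith : (0:ℝ) ≤ u)] at h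
    have hrec : 1 - wG m (k+1) = (u + s)/2 := by
      show 1 - (1 + wG m k - Real.sqrt ((1 - wG m k) ^ 2 + 1 / (m : ℝ))) / 2 = _
      rw [← hudef, ← hsdef]; ring
    have hinv : (m:ℝ) * (1/(m:ℝ)) = 1 := by field_simp
    have hms : (m:ℝ)*(s-u)*(s+u) = 1 := by
      linear_combination (m:ℝ)*hs2 + hinv
    clear_value u s
    rw [hrec]
    push_cast
    refine ⟨by linarith, ?_, ?_⟩
    · nlinarith [hb, hms, mul_nonneg hm0.le (sq_nonneg (s-u))]
    · have h1 : s + u ≥ 1 := by linarith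
      have h2 : (m:ℝ)*(s-u) ≤ 1 := by
        nlinarith [hms, h1, mul_nonneg hm0.le (sub_nonneg.2 hsu)]
      have h2b : ((m:ℝ)-1)*(s-u) ≤ 1 :=
        le_trans (mul_le_mul_of_nonneg_right (by linarith) (sub_nonneg.2 hsu)) h2
      have h3 : 2*(m:ℝ)*u ≥ ((m:ℝ)-1)*(s+u) := by nlinarith [h2b, hu]
      have h5 : 2*(m:ℝ)^2*u*(s-u)*(s+u) = 2*(m:ℝ)*u := by
        linear_combination 2*(m:ℝ)*u*hms
      have h4 : (m:ℝ)-1 ≤ 2*(m:ℝ)^2*u*(s-u) := by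
        by_contra hcon
        push_neg at hcon
        have hx := mul_lt_mul_of_pos_right hcon (show (0:ℝ) < s+u by linarith)
        nlinarith [h5, h3, hx]
      have hmss : (m:ℝ)^2*s^2 = (m:ℝ)^2*u^2 + m := by
        linear_combination (m:ℝ)*hms
      nlinarith [hc, h4, hmss]

lemma dG_bounds (m j : ℕ) (hm : 2 ≤ m) (hj : (j:ℝ) ≤ m) :
    1 - 1/((m:ℝ)+2*j-1) ≤ dG m j ∧ dG m j ≤ 1 - 1/((m:ℝ)+2*j+4) := by
  obtain ⟨hu, hb, hc⟩ := wG_key m (by omega) j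
  have hm2 : (2:ℝ) ≤ m := by exact_mod_cast hm
  have hm0 : (0:ℝ) < m := by linarith
  set u := 1 - wG m j with hudef
  set s := Real.sqrt (u^2 + 1/(m:ℝ)) with hsdef
  have hsnn : 0 ≤ s := Real.sqrt_nonneg _
  have hs2 : s^2 = u^2 + 1/(m:ℝ)  := Real.sq_sqrt (by positivity)
  have hsu : u ≤ s := by
    have h := Real.sqrt_le_sqrt (show u^2 ≤ u^2 + 1/(m:ℝ) by
      have : (0:ℝ) ≤ 1/(m:ℝ) := by positivity
      linarith)
    rwa [Real.sqrt_sq (by linarith : (0:ℝ) ≤ u)] at h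
  have hs0 : (0:ℝ) < s := by linarith
  have hdG : dG m j = 1 - (s-u)/(2*s) := by
    show (1/2)*(1 + u/s) = _
    field_simp
    ring
  have hinv : (m:ℝ) * (1/(m:ℝ)) = 1 := by field_simp
  have hms : (m:ℝ)*(s-u)*(s+u) = 1 := by
    linear_combination (m:ℝ)*hs2 + hinv
  clear_value u s
  rw [hdG]
  have hDpos : (0:ℝ) < 2*m*s*(s+u) := by positivity
  have hfrac : (s-u)/(2*s) = 1/(2*(m:ℝ)*s*(s+u)) := by
    rw [div_eq_div_iff (by positivity : (0:ℝ) < 2*s).ne' hDpos.ne']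
    linear_combination 2*s*hms
  rw [hfrac]
  have hD1 : (m:ℝ)+2*j-1 ≤ 2*(m:ℝ)*s*(s+u) := by
    nlinarith [hc, hj, hm0,
      mul_nonneg (mul_nonneg (mul_pos hm0 hm0).le (sub_nonneg.2 hsu))
        (show (0:ℝ) ≤ s + 2*u by linarith)]
  have hD2 : 2*(m:ℝ)*s*(s+u) ≤ (m:ℝ)+2*j+4 := by
    nlinarith [hb, hms,
      mul_nonneg (mul_nonneg hm0.le hsnn) (sub_nonneg.2 hsu)]
  constructor
  · have : 1/(2*(m:ℝ)*s*(s+u)) ≤ 1/((m:ℝ)+2*j-1) := by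
      apply one_div_le_one_div_of_le (by linarith) hD1
    linarith
  · have : 1/((m:ℝ)+2*j+4) ≤ 1/(2*(m:ℝ)*s*(s+u)) := by
      apply one_div_le_one_div_of_le hDpos hD2
    linarith

lemma sandwich (n : ℝ) (hn : 16 ≤ n) :
    Real.sqrt n / Real.sqrt (n+2) * (1 - 6/n^2) ≤ 1 - 1/(n-1) ∧
    1 - 1/(n+4) ≤ Real.sqrt n / Real.sqrt (n+2) * (1 + 6/n^2) := by
  have hn0 : (0:ℝ) < n := by linarith
  have h2 : (0:ℝ) < n + 2 := by linarith
  have h1 : (0:ℝ) < n - 1 := by linarith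
  have h4 : (0:ℝ) < n + 4 := by linarith
  have hq : (Real.sqrt n / Real.sqrt (n+2))^2 = n/(n+2) := by
    rw [div_pow, Real.sq_sqrt hn0.le, Real.sq_sqrt h2.le]
  have hqnn : 0 ≤ Real.sqrt n / Real.sqrt (n+2) := by positivity
  have hcsmall : 6/n^2 ≤ 1 := by
    rw [div_le_one (by positivity)]
    nlinarith
  constructor
  · have hL : 0 ≤ Real.sqrt n / Real.sqrt (n+2) * (1 - 6/n^2) :=
      mul_nonneg hqnn (by linarith)
    have hR : 0 ≤ 1 - 1/(n-1) := by
      have : 1/(n-1) ≤ 1 := by rw [div_le_one h1]; linarith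
      linarith
    have hsq : (Real.sqrt n / Real.sqrt (n+2) * (1 - 6/n^2))^2 ≤ (1 - 1/(n-1))^2 := by
      rw [mul_pow, hq]
      have e1 : 1 - 6/n^2 = (n^2-6)/n^2 := by field_simp
      have e2 : 1 - 1/(n-1) = (n-2)/(n-1) := by field_simp; ring
      rw [e1, e2, div_pow, div_pow, div_mul_div_comm,
        div_le_div_iff₀ (by positivity) (by positivity)]
      nlinarith [pow_pos hn0 3, pow_pos hn0 4, sq_nonneg n, pow_pos hn0 2]
    nlinarith [hsq, hL, hR]
  · have hR : 0 ≤ Real.sqrt n / Real.sqrt (n+2) * (1 + 6/n^2) :=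
      mul_nonneg hqnn (by positivity)
    have hL : 0 ≤ 1 - 1/(n+4) := by
      have : 1/(n+4) ≤ 1 := by rw [div_le_one h4]; linarith
      linarith
    have hsq : (1 - 1/(n+4))^2 ≤ (Real.sqrt n / Real.sqrt (n+2) * (1 + 6/n^2))^2 := by
      rw [mul_pow, hq]
      have e1 : 1 + 6/n^2 = (n^2+6)/n^2 := by field_simp
      have e2 : 1 - 1/(n+4) = (n+3)/(n+4) := by field_simp; ring
      rw [e1, e2, div_pow, div_pow, div_mul_div_comm,
        div_le_div_iff₀ (by positivity) (by positivity)]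
      nlinarith [pow_pos hn0 3, pow_pos hn0 4, pow_pos hn0 5]
    nlinarith [hsq, hL, hR]

lemma prod_ratio (m : ℕ) (hm : 1 ≤ m) (K : ℕ) :
    ∏ j ∈ Finset.range K, (Real.sqrt ((m:ℝ)+2*j) / Real.sqrt ((m:ℝ)+2*j+2))
      = Real.sqrt m / Real.sqrt ((m:ℝ)+2*K) := by
  have hm0 : (0:ℝ) < m := by exact_mod_cast hm
  induction K with
  | zero =>
    simp
    exact (div_self (ne_of_gt (Real.sqrt_pos.2 hm0))).symm
  | succ K ih =>
    rw [Finset.prod_range_succ, ih]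
    have e : (m:ℝ)+2*((K:ℕ)+1 : ℕ) = (m:ℝ)+2*K+2 := by push_cast; ring
    rw [e]
    have hne : Real.sqrt ((m:ℝ)+2*K) ≠ 0 :=
      ne_of_gt (Real.sqrt_pos.2 (by positivity))
    field_simp

lemma weier_lower (S : Finset ℕ) (c : ℕ → ℝ) (h0 : ∀ j ∈ S, 0 ≤ c j)
    (h1 : ∀ j ∈ S, c j ≤ 1) :
    1 - ∑ j ∈ S, c j ≤ ∏ j ∈ S, (1 - c j) := by
  induction S using Finset.cons_induction with
  | empty => simp
  | cons a S ha ih =>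
    rw [Finset.prod_cons, Finset.sum_cons]
    have hP1 : ∏ j ∈ S, (1 - c j) ≤ 1 :=
      Finset.prod_le_one (fun j hj => by
        have := h1 j (Finset.mem_cons_of_mem hj); linarith)
        (fun j hj => by have := h0 j (Finset.mem_cons_of_mem hj); linarith)
    have hih := ih (fun j hj => h0 j (Finset.mem_cons_of_mem hj))
      (fun j hj => h1 j (Finset.mem_cons_of_mem hj))
    have hSnn : 0 ≤ ∑ j ∈ S, c j :=
      Finset.sum_nonneg (fun j hj => h0 j (Finset.mem_cons_of_mem hj))
    have ha0 := h0 a (Finset.mem_cons_self a S)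
    have ha1 := h1 a (Finset.mem_cons_self a S)
    nlinarith [hih, hP1, hSnn, ha0, ha1]

lemma weier_upper (S : Finset ℕ) (c : ℕ → ℝ) (h0 : ∀ j ∈ S, 0 ≤ c j)
    (h1 : ∀ j ∈ S, c j ≤ 1) (hs : ∑ j ∈ S, c j < 1) :
    ∏ j ∈ S, (1 + c j) ≤ (1 - ∑ j ∈ S, c j)⁻¹ := by
  have hPl := weier_lower S c h0 h1
  have hPpos : 0 < ∏ j ∈ S, (1 - c j) := by
    apply Finset.prod_pos
    intro j hj
    have h1j := h1 j hj
    have hle : c j ≤ ∑ i ∈ S, c i := Finset.single_le_sum h0 hj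
    linarith
  have hmul : (∏ j ∈ S, (1 + c j)) * (∏ j ∈ S, (1 - c j)) ≤ 1 := by
    rw [← Finset.prod_mul_distrib]
    apply Finset.prod_le_one
    · intro j hj
      have := h0 j hj; have := h1 j hj
      nlinarith
    · intro j hj
      have := h0 j hj
      nlinarith [sq_nonneg (c j)]
  have h2 : (∏ j ∈ S, (1 + c j)) ≤ 1 / (∏ j ∈ S, (1 - c j)) :=
    (le_div_iff₀ hPpos).2 (by linarith [hmul])
  have h3 : 1 / (∏ j ∈ S, (1 - c j)) ≤ 1 / (1 - ∑ j ∈ S, c j) :=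
    one_div_le_one_div_of_le (by linarith) hPl
  calc ∏ j ∈ S, (1 + c j) ≤ 1 / (∏ j ∈ S, (1 - c j)) := h2
    _ ≤ 1 / (1 - ∑ j ∈ S, c j) := h3
    _ = (1 - ∑ j ∈ S, c j)⁻¹ := one_div _

lemma qG_bounds (m K : ℕ) (hm : 16 ≤ m) (hK : K ≤ m) :
    Real.sqrt m / Real.sqrt ((m:ℝ)+2*K) * (1 - 6/(m:ℝ)) ≤ qG m K ∧
    qG m K ≤ Real.sqrt m / Real.sqrt ((m:ℝ)+2*K) * (1 - 6/(m:ℝ))⁻¹ := by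
  have hm16 : (16:ℝ) ≤ m := by exact_mod_cast hm
  have hm0 : (0:ℝ) < m := by linarith
  set c : ℕ → ℝ := fun j => 6/((m:ℝ)+2*j)^2 with hcdef
  have hcpos : ∀ j : ℕ, 0 ≤ c j := fun j => by positivity
  have hcle : ∀ j : ℕ, c j ≤ 1 := by
    intro j
    have hj0 : (0:ℝ) ≤ j := Nat.cast_nonneg j
    rw [hcdef]
    rw [div_le_one (by positivity)]
    nlinarith
  have hfac : ∀ j ∈ Finset.range K,
      Real.sqrt ((m:ℝ)+2*j)/Real.sqrt ((m:ℝ)+2*j+2) * (1 - c j) ≤ dG m j ∧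
      dG m j ≤ Real.sqrt ((m:ℝ)+2*j)/Real.sqrt ((m:ℝ)+2*j+2) * (1 + c j) := by
    intro j hj
    have hjK : j < K := Finset.mem_range.1 hj
    have hjm : (j:ℝ) ≤ m := by
      have : j ≤ m := by omega
      exact_mod_cast this
    obtain ⟨hd1, hd2⟩ := dG_bounds m j (by omega) hjm
    have hn16 : (16:ℝ) ≤ (m:ℝ)+2*j := by
      have : (0:ℝ) ≤ j := Nat.cast_nonneg j
      linarith
    obtain ⟨hs1, hs2⟩ := sandwich ((m:ℝ)+2*j) hn16
    constructor
    · calc Real.sqrt ((m:ℝ)+2*j)/Real.sqrt ((m:ℝ)+2*j+2) * (1 - c j)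
          ≤ 1 - 1/((m:ℝ)+2*j-1) := hs1
        _ ≤ dG m j := hd1
    · calc dG m j ≤ 1 - 1/((m:ℝ)+2*j+4) := hd2
        _ ≤ Real.sqrt ((m:ℝ)+2*j)/Real.sqrt ((m:ℝ)+2*j+2) * (1 + c j) := hs2
  have hdGnn : ∀ j ∈ Finset.range K, 0 ≤ dG m j := by
    intro j hj
    have h := (hfac j hj).1
    have hr : (0:ℝ) ≤ Real.sqrt ((m:ℝ)+2*j)/Real.sqrt ((m:ℝ)+2*j+2) := by positivity
    have := hcle j
    nlinarith [mul_nonneg hr (show (0:ℝ) ≤ 1 - c j by linarith)]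
  have hsum : ∑ j ∈ Finset.range K, c j ≤ 6/(m:ℝ) := by
    have h1 : ∀ j ∈ Finset.range K, c j ≤ 6/(m:ℝ)^2 := by
      intro j hj
      have hj0 : (0:ℝ) ≤ j := Nat.cast_nonneg j
      show (6:ℝ)/((m:ℝ)+2*(j:ℝ))^2 ≤ 6/(m:ℝ)^2
      gcongr <;> nlinarith
    calc ∑ j ∈ Finset.range K, c j ≤ ∑ j ∈ Finset.range K, 6/(m:ℝ)^2 :=
          Finset.sum_le_sum h1
      _ = K * (6/(m:ℝ)^2) := by
          rw [Finset.sum_const, Finset.card_range, nsmul_eq_mul]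
      _ ≤ m * (6/(m:ℝ)^2) := by
          have : (K:ℝ) ≤ m := by exact_mod_cast hK
          gcongr
      _ = 6/(m:ℝ) := by field_simp
  have hsum_lt : ∑ j ∈ Finset.range K, c j < 1 := by
    have : 6/(m:ℝ) < 1 := by rw [div_lt_one hm0]; linarith
    linarith
  have htel : ∏ j ∈ Finset.range K,
      (Real.sqrt ((m:ℝ)+2*j) / Real.sqrt ((m:ℝ)+2*j+2))
      = Real.sqrt m / Real.sqrt ((m:ℝ)+2*K) := prod_ratio m (by omega) K
  have hrnn : (0:ℝ) ≤ Real.sqrt m / Real.sqrt ((m:ℝ)+2*K) := by positivity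
  have hW1 := weier_lower (Finset.range K) c (fun j _ => hcpos j) (fun j _ => hcle j)
  have hW2 := weier_upper (Finset.range K) c (fun j _ => hcpos j) (fun j _ => hcle j) hsum_lt
  constructor
  · calc Real.sqrt m / Real.sqrt ((m:ℝ)+2*K) * (1 - 6/m)
        ≤ Real.sqrt m / Real.sqrt ((m:ℝ)+2*K) * (1 - ∑ j ∈ Finset.range K, c j) := by
          apply mul_le_mul_of_nonneg_left (by linarith) hrnn
      _ ≤ Real.sqrt m / Real.sqrt ((m:ℝ)+2*K) * ∏ j ∈ Finset.range K, (1 - c j) := by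
          apply mul_le_mul_of_nonneg_left hW1 hrnn
      _ = ∏ j ∈ Finset.range K,
            (Real.sqrt ((m:ℝ)+2*j)/Real.sqrt ((m:ℝ)+2*j+2) * (1 - c j)) := by
          rw [Finset.prod_mul_distrib, htel]
      _ ≤ ∏ j ∈ Finset.range K, dG m j := by
          apply Finset.prod_le_prod
          · intro j hj
            have hr : (0:ℝ) ≤ Real.sqrt ((m:ℝ)+2*j)/Real.sqrt ((m:ℝ)+2*j+2) := by positivity
            exact mul_nonneg hr (by linarith [hcle j])
          · exact fun j hj => (hfac j hj).1
      _ = qG m K := rfl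
  · calc qG m K = ∏ j ∈ Finset.range K, dG m j := rfl
      _ ≤ ∏ j ∈ Finset.range K,
            (Real.sqrt ((m:ℝ)+2*j)/Real.sqrt ((m:ℝ)+2*j+2) * (1 + c j)) := by
          apply Finset.prod_le_prod hdGnn
          exact fun j hj => (hfac j hj).2
      _ = Real.sqrt m / Real.sqrt ((m:ℝ)+2*K) * ∏ j ∈ Finset.range K, (1 + c j) := by
          rw [Finset.prod_mul_distrib, htel]
      _ ≤ Real.sqrt m / Real.sqrt ((m:ℝ)+2*K) * (1 - ∑ j ∈ Finset.range K, c j)⁻¹ := by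
          apply mul_le_mul_of_nonneg_left hW2 hrnn
      _ ≤ Real.sqrt m / Real.sqrt ((m:ℝ)+2*K) * (1 - 6/(m:ℝ))⁻¹ := by
          apply mul_le_mul_of_nonneg_left _ hrnn
          have hpos : (0:ℝ) < 1 - 6/(m:ℝ) := by
            rw [sub_pos, div_lt_one hm0]; linarith
          rw [← one_div, ← one_div]
          exact one_div_le_one_div_of_le hpos (by linarith [hsum])

theorem godelm_macroscopic_cut (t : ℝ) (ht : t ∈ Set.Icc (0 : ℝ) 1) :
    Tendsto (fun m : ℕ => qG m ⌊t * ((m : ℝ) - 1)⌋₊) atTop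
      (nhds (1 / Real.sqrt (1 + 2 * t))) := by
  obtain ⟨ht0, ht1⟩ := ht
  set K : ℕ → ℕ := fun m => ⌊t * ((m:ℝ) - 1)⌋₊ with hKdef
  have h12t : (0:ℝ) < 1 + 2*t := by linarith
  -- K m ≤ m for m ≥ 1, and bounds on (K m : ℝ)
  have hKup : ∀ m : ℕ, 1 ≤ m → (K m : ℝ) ≤ t * ((m:ℝ) - 1) := by
    intro m hm
    have hm1 : (1:ℝ) ≤ m := by exact_mod_cast hm
    exact Nat.floor_le (by nlinarith)
  have hKlow : ∀ m : ℕ, t * ((m:ℝ) - 1) - 1 < (K m : ℝ) := by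
    intro m
    have := Nat.lt_floor_add_one (t * ((m:ℝ) - 1))
    linarith
  have hKm : ∀ m : ℕ, 1 ≤ m → K m ≤ m := by
    intro m hm
    have hm1 : (1:ℝ) ≤ m := by exact_mod_cast hm
    have h1 : (K m : ℝ) ≤ (m:ℝ) := by nlinarith [hKup m hm]
    exact_mod_cast h1
  -- limit of K m / m
  have hKlim : Tendsto (fun m : ℕ => (K m : ℝ) / m) atTop (nhds t) := by
    have hup : Tendsto (fun m : ℕ => t - t * (1/(m:ℝ))) atTop (nhds t) := by
      have : Tendsto (fun n : ℕ => 1/(n:ℝ)) atTop (nhds 0) := tendsto_one_div_atTop_nhds_zero_nat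
      have h := this.const_mul t
      have h2 := (tendsto_const_nhds : Tendsto (fun _ : ℕ => t) atTop (nhds t)).sub h
      simpa using h2
    have hlow : Tendsto (fun m : ℕ => t - (t+1) * (1/(m:ℝ))) atTop (nhds t) := by
      have : Tendsto (fun n : ℕ => 1/(n:ℝ)) atTop (nhds 0) := tendsto_one_div_atTop_nhds_zero_nat
      have h := this.const_mul (t+1)
      have h2 := (tendsto_const_nhds : Tendsto (fun _ : ℕ => t) atTop (nhds t)).sub h
      simpa using h2
    apply tendsto_of_tendsto_of_tendsto_of_le_of_le' hlow hup
    · filter_upwards [eventually_ge_atTop 1] with m hm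
      have hm0 : (0:ℝ) < m := by exact_mod_cast hm
      rw [le_div_iff₀ hm0]
      have hexp : (t - (t+1) * (1/(m:ℝ))) * m = t*((m:ℝ)-1) - 1 := by
        field_simp; ring
      rw [hexp]
      linarith [hKlow m]
    · filter_upwards [eventually_ge_atTop 1] with m hm
      have hm0 : (0:ℝ) < m := by exact_mod_cast hm
      rw [div_le_iff₀ hm0]
      have hexp : (t - t * (1/(m:ℝ))) * m = t*((m:ℝ)-1) := by
        field_simp
      rw [hexp]
      exact hKup m hm
  -- limit of the sqrt ratio
  have hAlim : Tendsto (fun m : ℕ => Real.sqrt m / Real.sqrt ((m:ℝ) + 2*(K m)))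
      atTop (nhds (1 / Real.sqrt (1+2*t))) := by
    have h1 : Tendsto (fun m : ℕ => 1 + 2*((K m : ℝ)/m)) atTop (nhds (1+2*t)) := by
      have := hKlim.const_mul (2:ℝ)
      have h2 := (tendsto_const_nhds : Tendsto (fun _ : ℕ => (1:ℝ)) atTop (nhds 1)).add this
      simpa using h2
    have h2 : Tendsto (fun m : ℕ => Real.sqrt (1 + 2*((K m : ℝ)/m))) atTop
        (nhds (Real.sqrt (1+2*t))) := h1.sqrt
    have h3 : Tendsto (fun m : ℕ => 1 / Real.sqrt (1 + 2*((K m : ℝ)/m))) atTop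
        (nhds (1 / Real.sqrt (1+2*t))) := by
      apply Tendsto.div tendsto_const_nhds h2
      exact ne_of_gt (Real.sqrt_pos.2 h12t)
    apply h3.congr'
    filter_upwards [eventually_ge_atTop 1] with m hm
    have hm0 : (0:ℝ) < m := by exact_mod_cast hm
    have hKnn : (0:ℝ) ≤ (K m : ℝ) := Nat.cast_nonneg _
    have e1 : 1 + 2*((K m : ℝ)/m) = ((m:ℝ) + 2*(K m))/m := by field_simp
    have e2 : Real.sqrt (((m:ℝ) + 2*(K m))/m) = Real.sqrt ((m:ℝ) + 2*(K m)) / Real.sqrt m :=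
      Real.sqrt_div (by linarith) m
    rw [e1, e2, one_div_div]
  -- final squeeze
  have hfac1 : Tendsto (fun m : ℕ => 1 - 6/(m:ℝ)) atTop (nhds 1) := by
    have := tendsto_one_div_atTop_nhds_zero_nat.const_mul (6:ℝ)
    have h2 := (tendsto_const_nhds : Tendsto (fun _ : ℕ => (1:ℝ)) atTop (nhds 1)).sub this
    simp only [mul_one_div] at h2
    simpa using h2
  have hfac2 : Tendsto (fun m : ℕ => (1 - 6/(m:ℝ))⁻¹) atTop (nhds 1) := by
    have := hfac1.inv₀ (by norm_num)
    simpa using this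
  have hL : Tendsto (fun m : ℕ =>
      Real.sqrt m / Real.sqrt ((m:ℝ) + 2*(K m)) * (1 - 6/(m:ℝ))) atTop
      (nhds (1 / Real.sqrt (1+2*t))) := by
    have := hAlim.mul hfac1
    simpa using this
  have hU : Tendsto (fun m : ℕ =>
      Real.sqrt m / Real.sqrt ((m:ℝ) + 2*(K m)) * (1 - 6/(m:ℝ))⁻¹) atTop
      (nhds (1 / Real.sqrt (1+2*t))) := by
    have := hAlim.mul hfac2
    simpa using this
  apply tendsto_of_tendsto_of_tendsto_of_le_of_le' hL hU
  · filter_upwards [eventually_ge_atTop 16] with m hm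
    exact (qG_bounds m (K m) hm (hKm m (by omega))).1
  · filter_upwards [eventually_ge_atTop 16] with m hm
    exact (qG_bounds m (K m) hm (hKm m (by omega))).2
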